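/- Fix an integer d ≥ 2 and real numbers 0 ≤ t_1 < t_2 < t_3 ≤ 1. There exists a constant K > 0 such that for all integers n ≥ 1, the uniformly random n-step non-backtracking walk satisfies the tightness moment bound E[ ‖X_n(t_2) − X_n(t_1)‖_2² · ‖X_n(t_3) − X_n(t_2)‖_2² ] ≤ K·(t_2 − t_1)·(t_3 − t_2), where X_n(t) = ω_{⌊nt⌋}/√n. -/
import Mathlib


open scoped BigOperators
open Matrix

noncomputable section

/-- The index set `I = {-d, …, -1, 1, …, d}`. -/
def Idx (d : ℕ) : Finset ℤ := (Finset.Icc (-(d : ℤ)) d).erase 0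

lemma mem_Idx {d : ℕ} {ι : ℤ} (h : ι ∈ Idx d) : ι ≠ 0 ∧ -(d : ℤ) ≤ ι ∧ ι ≤ d := by
  simpa [Idx, Finset.mem_erase, Finset.mem_Icc, and_assoc] using h

lemma mem_Idx' {d : ℕ} {ι : ℤ} (h1 : ι ≠ 0) (h2 : -(d : ℤ) ≤ ι) (h3 : ι ≤ d) :
    ι ∈ Idx d := by
  simp [Idx, Finset.mem_erase, Finset.mem_Icc]; omega

/-- `k_ι = sign(ι) · k_{|ι|}` (with `|ι| ∈ {1,…,d}` re-indexed as `Fin d`). -/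
def kc {d : ℕ} (k : Fin d → ℝ) (ι : Idx d) : ℝ :=
  (ι.1.sign : ℝ) * k ⟨ι.1.natAbs - 1, by
    obtain ⟨h1, h2, h3⟩ := mem_Idx ι.2; omega⟩

/-- The negation `-ι` as an element of the index set. -/
def negIdx {d : ℕ} (ι : Idx d) : Idx d :=
  ⟨-ι.1, by obtain ⟨h1, h2, h3⟩ := mem_Idx ι.2; exact mem_Idx' (by omega) (by omega) (by omega)⟩

/-- The coordinate vector `e⃗_ι ∈ ℂ^I`. -/
def eVec {d : ℕ} (ι : Idx d) : Idx d → ℂ := fun κ => if κ = ι then 1 else 0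

/-- The unit step `e_ι = sign(ι)·(basis vector |ι|)` in `ℤ^d`. -/
def stepVec {d : ℕ} (ι : Idx d) : Fin d → ℤ :=
  fun j => if (j : ℕ) = ι.1.natAbs - 1 then ι.1.sign else 0

/-- The all-ones matrix `C`. -/
def matC (d : ℕ) : Matrix (Idx d) (Idx d) ℂ := Matrix.of fun _ _ => 1

/-- The matrix `J` with `J_{ι,κ} = δ_{ι,-κ}`. -/
def matJ (d : ℕ) : Matrix (Idx d) (Idx d) ℂ :=
  Matrix.of fun ι κ => if ι.1 = -κ.1 then 1 else 0

/-- The diagonal matrix `D[k]` with entries `e^{i k_ι}`. -/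
def matD {d : ℕ} (k : Fin d → ℝ) : Matrix (Idx d) (Idx d) ℂ :=
  Matrix.diagonal fun ι => Complex.exp (Complex.I * (kc k ι : ℂ))

/-- The NBW transition matrix `A[k] = (C − J)·D[−k]`. -/
def matA {d : ℕ} (k : Fin d → ℝ) : Matrix (Idx d) (Idx d) ℂ :=
  (matC d - matJ d) * matD (-k)

/-- `ω` is an `n`-step nearest-neighbour non-backtracking walk on `ℤ^d`. -/
def IsNBW (d n : ℕ) (ω : Fin (n + 1) → (Fin d → ℤ)) : Prop :=
  ω 0 = 0 ∧
  (∀ i : ℕ, ∀ hi : i < n,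
    (∑ j, |ω ⟨i + 1, by omega⟩ j - ω ⟨i, by omega⟩ j|) = 1) ∧
  (∀ i : ℕ, ∀ hi : i + 2 ≤ n, ω ⟨i + 2, by omega⟩ ≠ ω ⟨i, by omega⟩)

/-- `b_n(x)`: the number of `n`-step NBWs ending at `x`. -/
def bc (d n : ℕ) (x : Fin d → ℤ) : ℕ :=
  Nat.card {ω : Fin (n + 1) → (Fin d → ℤ) // IsNBW d n ω ∧ ω (Fin.last n) = x}

/-- `b_n^ι(x)`: the number of `n`-step NBWs ending at `x` whose first step is not `e_ι`. -/
def bcRes (d n : ℕ) (ι : Idx d) (x : Fin d → ℤ) : ℕ :=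
  Nat.card {ω : Fin (n + 1) → (Fin d → ℤ) //
    IsNBW d n ω ∧ ω (Fin.last n) = x ∧ ∀ _ : 1 ≤ n, ω ⟨1, by omega⟩ ≠ stepVec ι}

/-- Fourier transform `f̂(k) = Σ_x f(x) e^{i k·x}` of a (finitely supported) `f : ℤ^d → ℕ`. -/
def fhat {d : ℕ} (f : (Fin d → ℤ) → ℕ) (k : Fin d → ℝ) : ℂ :=
  ∑' x : Fin d → ℤ, (f x : ℂ) * Complex.exp (Complex.I * ∑ j, (k j : ℂ) * (x j : ℂ))

/-- `b̂_n(k)`. -/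
def bhat (d n : ℕ) (k : Fin d → ℝ) : ℂ := fhat (bc d n) k

/-- `b⃗_n(k)`, the vector with entries `b̂_n^ι(k)`. -/
def bvec (d n : ℕ) (k : Fin d → ℝ) : Idx d → ℂ := fun ι => fhat (bcRes d n ι) k

/-- `D̂(k) = (1/d) Σ_j cos k_j`. -/
def Dhat {d : ℕ} (k : Fin d → ℝ) : ℝ := (1 / d) * ∑ j, Real.cos (k j)


/-- For `t ≤ 1`, the index `⌊t·n⌋` is a valid index of an `n`-step walk. -/
lemma floor_index_lt {t : ℝ} (ht : t ≤ 1) (n : ℕ) : ⌊t * n⌋₊ < n + 1 := by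
  have h2 : t * n ≤ (n : ℝ) := mul_le_of_le_one_left (Nat.cast_nonneg n) ht
  have h3 : ⌊t * n⌋₊ ≤ ⌊(n : ℝ)⌋₊ := Nat.floor_le_floor h2
  simpa [Nat.floor_natCast] using Nat.lt_succ_of_le h3


namespace NBWAux
variable {d : ℕ}

lemma Idx_facts (ι : Idx d) : ι.1 ≠ 0 ∧ 1 ≤ ι.1.natAbs ∧ ι.1.natAbs ≤ d := by
  obtain ⟨h1, h2, h3⟩ := mem_Idx ι.2
  refine ⟨h1, by omega, by omega⟩

/-- the coordinate index of a step -/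
def idx0 (ι : Idx d) : Fin d :=
  ⟨ι.1.natAbs - 1, by obtain ⟨h1, h2, h3⟩ := Idx_facts ι; omega⟩

lemma stepVec_apply (ι : Idx d) (j : Fin d) :
    stepVec ι j = if j = idx0 ι then ι.1.sign else 0 := by
  simp only [stepVec, idx0, Fin.ext_iff]

lemma sign_sq (ι : Idx d) : ι.1.sign * ι.1.sign = 1 := by
  obtain ⟨h1, -, -⟩ := Idx_facts ι
  rcases lt_trichotomy ι.1 0 with h | h | h
  · simp [Int.sign_eq_neg_one_of_neg h]
  · exact absurd h h1
  · simp [Int.sign_eq_one_of_pos h]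

lemma sign_ne_zero (ι : Idx d) : ι.1.sign ≠ 0 := by
  have := sign_sq ι; intro h; rw [h] at this; simp at this

lemma negIdx_negIdx (ι : Idx d) : negIdx (negIdx ι) = ι := by
  simp [negIdx]

lemma stepVec_negIdx (ι : Idx d) (j : Fin d) : stepVec (negIdx ι) j = - stepVec ι j := by
  simp only [stepVec, negIdx, Int.natAbs_neg, Int.sign_neg]
  split <;> simp

lemma stepVec_injective : Function.Injective (stepVec (d := d)) := by
  intro ι κ h
  have h0 := congrFun h (idx0 ι)
  rw [stepVec_apply, stepVec_apply, if_pos rfl] at h0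
  by_cases hik : idx0 ι = idx0 κ
  · rw [if_pos hik] at h0
    obtain ⟨hι1, hι2, hι3⟩ := Idx_facts ι
    obtain ⟨hκ1, hκ2, hκ3⟩ := Idx_facts κ
    have hnat : ι.1.natAbs = κ.1.natAbs := by
      have := Fin.mk.injEq .. ▸ hik
      simp only [idx0, Fin.mk.injEq] at hik
      omega
    have : ι.1 = κ.1 := by
      rw [← Int.sign_mul_natAbs ι.1, ← Int.sign_mul_natAbs κ.1, h0, hnat]
    exact Subtype.ext this
  · rw [if_neg hik] at h0
    exact absurd h0 (sign_ne_zero ι)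


/-- real dot product of two steps -/
def dotE (ι κ : Idx d) : ℝ := ∑ j, (stepVec ι j : ℝ) * (stepVec κ j : ℝ)

lemma dotE_self (ι : Idx d) : dotE ι ι = 1 := by
  unfold dotE
  have : ∀ j : Fin d, (stepVec ι j : ℝ) * (stepVec ι j : ℝ)
      = if j = idx0 ι then 1 else 0 := by
    intro j
    rw [stepVec_apply]
    split <;> simp [← Int.cast_mul, sign_sq ι]
  simp [this]

lemma dotE_comm (ι κ : Idx d) : dotE ι κ = dotE κ ι := by
  unfold dotE; exact Finset.sum_congr rfl fun j _ => mul_comm _ _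

lemma abs_stepVec_le (ι : Idx d) (j : Fin d) : |(stepVec ι j : ℝ)| ≤ 1 := by
  rw [stepVec_apply]
  split_ifs
  · rw [← Int.cast_abs]
    obtain ⟨h1, -, -⟩ := Idx_facts ι
    rcases lt_trichotomy ι.1 0 with h|h|h
    · simp [Int.sign_eq_neg_one_of_neg h]
    · exact absurd h h1
    · simp [Int.sign_eq_one_of_pos h]
  · simp

lemma abs_dotE_le (ι κ : Idx d) : |dotE ι κ| ≤ 1 := by
  unfold dotE
  have h : ∀ j : Fin d, (stepVec ι j : ℝ) * (stepVec κ j : ℝ)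
      = if j = idx0 ι then (stepVec ι j : ℝ) * (stepVec κ j : ℝ) else 0 := by
    intro j; split_ifs with hj
    · rfl
    · rw [stepVec_apply, if_neg hj]; simp
  rw [Finset.sum_congr rfl fun j _ => h j, Finset.sum_ite_eq' Finset.univ (idx0 ι)]
  simp only [Finset.mem_univ, if_true]
  rw [abs_mul]
  calc |(stepVec ι (idx0 ι) : ℝ)| * |(stepVec κ (idx0 ι) : ℝ)| ≤ 1 * 1 :=
        mul_le_mul (abs_stepVec_le _ _) (abs_stepVec_le _ _) (abs_nonneg _) zero_le_one
    _ = 1 := one_mul 1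

lemma card_Idx (hd : 1 ≤ d) : (Idx d).card = 2 * d := by
  have h0 : (0 : ℤ) ∈ Finset.Icc (-(d : ℤ)) d := by
    rw [Finset.mem_Icc]
    constructor <;> omega
  have : (Idx d).card = (Finset.Icc (-(d : ℤ)) d).card - 1 :=
    Finset.card_erase_of_mem h0
  rw [this, Int.card_Icc]
  simp only [sub_neg_eq_add]
  omega

/-- sum of all steps is zero -/
lemma sum_stepVec (j : Fin d) : ∑ κ : Idx d, (stepVec κ j : ℝ) = 0 := by
  apply Finset.sum_involution (fun κ _ => negIdx κ)
  · intro κ _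
    rw [stepVec_negIdx]; push_cast; ring
  · intro κ _ _ h
    have : (negIdx κ).1 = κ.1 := congrArg Subtype.val h
    obtain ⟨h1, -, -⟩ := Idx_facts κ
    simp only [negIdx] at this
    omega
  · intro κ _; exact Finset.mem_univ _
  · intro κ _; exact negIdx_negIdx κ

/-- key reduction: summing `dotE ι κ` over all κ except `negIdx τ` gives `dotE ι τ`. -/
lemma sum_dotE_erase (ι τ : Idx d) :
    ∑ κ ∈ Finset.univ.erase (negIdx τ), dotE ι κ = dotE ι τ := by
  have huniv : ∑ κ : Idx d, dotE ι κ = 0 := by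
    unfold dotE
    rw [Finset.sum_comm]
    refine Finset.sum_eq_zero fun j _ => ?_
    rw [← Finset.mul_sum, sum_stepVec, mul_zero]
  have herase := Finset.sum_erase_add Finset.univ (fun κ => dotE ι κ)
    (Finset.mem_univ (negIdx τ))
  have hneg : dotE ι (negIdx τ) = - dotE ι τ := by
    unfold dotE
    simp [stepVec_negIdx]
  rw [huniv] at herase
  linarith [herase, hneg]

/-- validity (non-backtracking) of a step sequence -/
def Valid {m : ℕ} (s : Fin m → Idx d) : Prop :=
  ∀ i : Fin m, ∀ h : (i : ℕ) + 1 < m, s ⟨(i : ℕ) + 1, h⟩ ≠ negIdx (s i)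

instance {m : ℕ} : DecidablePred (Valid (d := d) (m := m)) := fun _ =>
  Fintype.decidableForallFintype

/-- the finset of valid step sequences of length m -/
def P (d m : ℕ) : Finset (Fin m → Idx d) := Finset.univ.filter Valid

lemma snocLT {α : Type*} {m : ℕ} (s : Fin m → α) (κ : α) (i : ℕ) (h : i < m)
    (h' : i < m + 1) : (Fin.snoc s κ : Fin (m + 1) → α) ⟨i, h'⟩ = s ⟨i, h⟩ := by
  simp [Fin.snoc, h]

lemma snocLast {α : Type*} {m : ℕ} (s : Fin m → α) (κ : α) (h : m < m + 1) :
    (Fin.snoc s κ : Fin (m + 1) → α) ⟨m, h⟩ = κ := by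
  simp [Fin.snoc]

lemma valid_snoc {m : ℕ} (hm : 1 ≤ m) (s : Fin m → Idx d) (κ : Idx d) :
    Valid (Fin.snoc s κ : Fin (m + 1) → Idx d) ↔
      Valid s ∧ κ ≠ negIdx (s ⟨m - 1, by omega⟩) := by
  constructor
  · intro V
    constructor
    · rintro ⟨i, hi⟩ h
      have h2 : i + 1 < m + 1 := by omega
      have := V ⟨i, by omega⟩ h2
      rwa [snocLT s κ (i + 1) h, snocLT s κ i hi] at this
    · have h2 : (m - 1) + 1 < m + 1 := by omega
      have := V ⟨m - 1, by omega⟩ h2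
      rw [snocLT s κ (m - 1) (by omega)] at this
      intro hEq
      apply this
      rw [← hEq]
      have e : (⟨(m - 1) + 1, h2⟩ : Fin (m + 1)) = ⟨m, by omega⟩ :=
        Fin.ext (by simp; omega)
      rw [e, snocLast]
  · rintro ⟨Vs, hκ⟩ ⟨i, hi'⟩ h
    have h' : i + 1 < m + 1 := h
    by_cases hi : i + 1 < m
    · rw [snocLT s κ (i + 1) hi, snocLT s κ i (by omega)]
      exact Vs ⟨i, by omega⟩ hi
    · have him : i = m - 1 := by omega
      clear h'
      have e1 : (⟨i + 1, h⟩ : Fin (m + 1)) = ⟨m, by omega⟩ := Fin.ext (by simp; omega)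
      rw [e1, snocLast, snocLT s κ i (by omega)]
      subst him
      exact hκ

/-- snoc equivalence -/
def snocEquiv' (α : Type*) (m : ℕ) : ((Fin m → α) × α) ≃ (Fin (m + 1) → α) where
  toFun p := Fin.snoc p.1 p.2
  invFun t := (Fin.init t, t (Fin.last m))
  left_inv p := by simp
  right_inv t := Fin.snoc_init_self t

lemma sum_P_succ {m : ℕ} (hm : 1 ≤ m) (F : (Fin (m + 1) → Idx d) → ℝ) :
    ∑ t ∈ P d (m + 1), F t
      = ∑ s ∈ P d m, ∑ κ ∈ Finset.univ.erase (negIdx (s ⟨m - 1, by omega⟩)),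
          F (Fin.snoc s κ) := by
  classical
  have L1 : ∑ t ∈ P d (m + 1), F t
      = ∑ t : Fin (m + 1) → Idx d, if Valid t then F t else 0 := by
    rw [P, Finset.sum_filter]
  have L2 : ∑ t : Fin (m + 1) → Idx d, (if Valid t then F t else 0)
      = ∑ p : (Fin m → Idx d) × Idx d,
          (if Valid (Fin.snoc p.1 p.2 : Fin (m + 1) → Idx d) then F (Fin.snoc p.1 p.2)
            else 0) := by
    exact (Fintype.sum_equiv (snocEquiv' (Idx d) m)
      (fun p => if Valid (Fin.snoc p.1 p.2 : Fin (m + 1) → Idx d) then F (Fin.snoc p.1 p.2)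
        else 0)
      (fun t => if Valid t then F t else 0) (fun p => rfl)).symm
  rw [L1, L2, Fintype.sum_prod_type]
  rw [P, Finset.sum_filter]
  refine Finset.sum_congr rfl fun s _ => ?_
  have key : ∀ κ : Idx d,
      (if Valid (Fin.snoc s κ : Fin (m + 1) → Idx d) then F (Fin.snoc s κ) else 0)
      = if Valid s ∧ κ ≠ negIdx (s ⟨m - 1, by omega⟩) then F (Fin.snoc s κ) else 0 := by
    intro κ
    by_cases hv : Valid (Fin.snoc s κ : Fin (m + 1) → Idx d)
    · rw [if_pos hv, if_pos ((valid_snoc hm s κ).1 hv)]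
    · rw [if_neg hv, if_neg (fun hc => hv ((valid_snoc hm s κ).2 hc))]
  rw [Finset.sum_congr rfl fun κ _ => key κ]
  by_cases hv : Valid s
  · rw [if_pos hv]
    rw [← Finset.filter_ne' Finset.univ (negIdx (s ⟨m - 1, by omega⟩)), Finset.sum_filter]
    refine Finset.sum_congr rfl fun κ _ => ?_
    simp [hv]
  · rw [if_neg hv]
    refine Finset.sum_eq_zero fun κ _ => ?_
    simp [hv]


/-- restriction of a step sequence -/
def res {m m' : ℕ} (h : m ≤ m') (t : Fin m' → Idx d) : Fin m → Idx d :=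
  fun i => t ⟨(i : ℕ), lt_of_lt_of_le i.2 h⟩

lemma res_snoc {m0 m : ℕ} (h : m0 ≤ m) (s : Fin m → Idx d) (κ : Idx d) :
    res (le_trans h (Nat.le_succ m)) (Fin.snoc s κ : Fin (m + 1) → Idx d) = res h s := by
  funext i
  exact snocLT s κ (i : ℕ) (lt_of_lt_of_le i.2 h) _

lemma res_eq_self {m : ℕ} (h : m ≤ m) (t : Fin m → Idx d) : res h t = t := by
  funext i
  simp [res]

lemma card_erase_Idx (hd : 1 ≤ d) (ν : Idx d) :
    (Finset.univ.erase ν).card = 2 * d - 1 := by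
  rw [Finset.card_erase_of_mem (Finset.mem_univ ν), Finset.card_univ, Fintype.card_coe,
    card_Idx hd]

/-- peel off the last step with a constant weight -/
lemma peel1 (hd : 1 ≤ d) {m : ℕ} (hm : 1 ≤ m) (G : (Fin m → Idx d) → ℝ) :
    ∑ t ∈ P d (m + 1), G (res (Nat.le_succ m) t)
      = ((2 * d - 1 : ℕ) : ℝ) * ∑ s ∈ P d m, G s := by
  rw [sum_P_succ hm (fun t => G (res (Nat.le_succ m) t))]
  rw [Finset.mul_sum]
  refine Finset.sum_congr rfl fun s _ => ?_
  have : ∀ κ : Idx d, G (res (Nat.le_succ m) (Fin.snoc s κ : Fin (m + 1) → Idx d))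
      = G s := by
    intro κ
    have := res_snoc (le_refl m) s κ
    rw [res_eq_self] at this
    exact congrArg G this
  rw [Finset.sum_congr rfl fun κ _ => this κ, Finset.sum_const, card_erase_Idx hd,
    nsmul_eq_mul]

/-- peel off the last step paired in a dot product: correlation transfer -/
lemma peelDot {m k : ℕ} (hm : 1 ≤ m) (hk : k < m)
    (G : (Fin m → Idx d) → ℝ) :
    ∑ t ∈ P d (m + 1),
        G (res (Nat.le_succ m) t) * dotE (t ⟨k, by omega⟩) (t ⟨m, by omega⟩)
      = ∑ s ∈ P d m, G s * dotE (s ⟨k, hk⟩) (s ⟨m - 1, by omega⟩) := by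
  rw [sum_P_succ hm]
  refine Finset.sum_congr rfl fun s _ => ?_
  have key : ∀ κ : Idx d,
      G (res (Nat.le_succ m) (Fin.snoc s κ : Fin (m + 1) → Idx d))
        * dotE ((Fin.snoc s κ : Fin (m + 1) → Idx d) ⟨k, by omega⟩)
            ((Fin.snoc s κ : Fin (m + 1) → Idx d) ⟨m, by omega⟩)
      = G s * dotE (s ⟨k, hk⟩) κ := by
    intro κ
    have h1 := res_snoc (le_refl m) s κ
    rw [res_eq_self] at h1
    rw [h1, snocLT s κ k hk, snocLast]
  rw [Finset.sum_congr rfl fun κ _ => key κ]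
  rw [← Finset.mul_sum, sum_dotE_erase]

/-- correlation reduction along the second index -/
lemma D1 {k : ℕ} (l : ℕ) (hkl : k ≤ l) (G : (Fin (k + 1) → Idx d) → ℝ) :
    ∑ s ∈ P d (l + 1),
        G (res (by omega) s) * dotE (s ⟨k, by omega⟩) (s ⟨l, by omega⟩)
      = ∑ u ∈ P d (k + 1), G u := by
  induction l, hkl using Nat.le_induction with
  | base =>
    refine Finset.sum_congr rfl fun s _ => ?_
    rw [dotE_self, mul_one, res_eq_self]
  | succ l hkl ih =>
    have step := peelDot (d := d) (m := l + 1) (k := k) (hm := by omega) (hk := by omega)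
      (G := fun s => G (res (by omega : k + 1 ≤ l + 1) s))
    exact step.trans ih

/-- full reduction: correlation decay with explicit geometric factor -/
lemma D2 (hd : 1 ≤ d) {k l : ℕ} (m : ℕ) (hkl : k ≤ l) (hlm : l < m)
    (G : (Fin (k + 1) → Idx d) → ℝ) :
    ∑ s ∈ P d m,
        G (res (by omega) s) * dotE (s ⟨k, by omega⟩) (s ⟨l, by omega⟩)
      = ((2 * d - 1 : ℕ) : ℝ) ^ (m - 1 - l) * ∑ u ∈ P d (k + 1), G u := by
  induction m, hlm using Nat.le_induction with
  | base =>
    have e0 : l + 1 - 1 - l = 0 := by omega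
    rw [e0, pow_zero, one_mul]
    exact D1 l hkl G
  | succ m hm ih =>
    have step := peel1 hd (m := m) (hm := by omega)
      (G := fun s => G (res (by omega : k + 1 ≤ m) s)
        * dotE (s ⟨k, by omega⟩) (s ⟨l, by omega⟩))
    have e2 : m + 1 - 1 - l = (m - 1 - l) + 1 := by omega
    calc ∑ s ∈ P d (m + 1),
          G (res (by omega) s) * dotE (s ⟨k, by omega⟩) (s ⟨l, by omega⟩)
        = ((2 * d - 1 : ℕ) : ℝ) * ∑ s ∈ P d m,
            G (res (by omega) s) * dotE (s ⟨k, by omega⟩) (s ⟨l, by omega⟩) := step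
      _ = ((2 * d - 1 : ℕ) : ℝ) * (((2 * d - 1 : ℕ) : ℝ) ^ (m - 1 - l)
            * ∑ u ∈ P d (k + 1), G u) := by rw [ih]
      _ = ((2 * d - 1 : ℕ) : ℝ) ^ (m + 1 - 1 - l) * ∑ u ∈ P d (k + 1), G u := by
          rw [e2, pow_succ]
          ring


lemma card_P (hd : 1 ≤ d) {m : ℕ} (hm : 1 ≤ m) :
    ((P d m).card : ℝ) = (2 * d : ℝ) * ((2 * d - 1 : ℕ) : ℝ) ^ (m - 1) := by
  induction m, hm using Nat.le_induction with
  | base =>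
    have : P d 1 = Finset.univ := by
      rw [P]
      refine Finset.filter_true_of_mem fun s _ => ?_
      intro i h
      omega
    rw [this, Finset.card_univ]
    have : Fintype.card (Fin 1 → Idx d) = 2 * d := by
      rw [Fintype.card_fun]
      simp [Fintype.card_coe, card_Idx hd]
    rw [this]
    simp
  | succ m hm ih =>
    have h1 : ((P d (m + 1)).card : ℝ) = ∑ t ∈ P d (m + 1), (1 : ℝ) := by
      rw [Finset.sum_const, nsmul_eq_mul, mul_one]
    have h2 := peel1 hd (m := m) hm (G := fun _ => (1 : ℝ))
    rw [h1, h2, Finset.sum_const, nsmul_eq_mul, mul_one, ih]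
    have e : m + 1 - 1 = (m - 1) + 1 := by omega
    rw [e, pow_succ]
    ring

/-- The master fourth-moment identity. -/
lemma Qval (hd : 1 ≤ d) {n i j k l : ℕ} (hij : i ≤ j) (hjk : j < k) (hkl : k ≤ l)
    (hln : l < n) :
    ∑ s ∈ P d n,
        dotE (s ⟨i, by omega⟩) (s ⟨j, by omega⟩) * dotE (s ⟨k, by omega⟩) (s ⟨l, by omega⟩)
      = (2 * d : ℝ) * ((2 * d - 1 : ℕ) : ℝ) ^ (n - 1)
          * (((2 * d - 1 : ℕ) : ℝ)⁻¹) ^ ((j - i) + (l - k)) := by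
  have hpos : (0 : ℝ) < ((2 * d - 1 : ℕ) : ℝ) := by
    have : 1 ≤ 2 * d - 1 := by omega
    exact_mod_cast Nat.lt_of_lt_of_le Nat.zero_lt_one this
  have step1 := D2 (d := d) hd (k := k) (l := l) n hkl hln
    (G := fun u => dotE (u ⟨i, by omega⟩) (u ⟨j, by omega⟩))
  have step2 := D2 (d := d) hd (k := i) (l := j) (k + 1) hij (by omega)
    (G := fun _ => (1 : ℝ))
  have hcard := card_P (d := d) hd (m := i + 1) (by omega)
  have lhs1 : ∑ s ∈ P d n,
        dotE (s ⟨i, by omega⟩) (s ⟨j, by omega⟩) * dotE (s ⟨k, by omega⟩) (s ⟨l, by omega⟩)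
      = ((2 * d - 1 : ℕ) : ℝ) ^ (n - 1 - l)
          * ∑ u ∈ P d (k + 1),
              dotE (u ⟨i, by omega⟩) (u ⟨j, by omega⟩) := step1
  have lhs2 : ∑ u ∈ P d (k + 1), dotE (u ⟨i, by omega⟩) (u ⟨j, by omega⟩)
      = ((2 * d - 1 : ℕ) : ℝ) ^ (k + 1 - 1 - j) * ((P d (i + 1)).card : ℝ) := by
    have : ∑ u ∈ P d (k + 1), dotE (u ⟨i, by omega⟩) (u ⟨j, by omega⟩)
        = ∑ u ∈ P d (k + 1),
            (fun _ : Fin (i + 1) → Idx d => (1 : ℝ)) (res (by omega) u)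
              * dotE (u ⟨i, by omega⟩) (u ⟨j, by omega⟩) := by
      refine Finset.sum_congr rfl fun u _ => ?_
      rw [one_mul]
    rw [this, step2, Finset.sum_const, nsmul_eq_mul, mul_one]
  rw [lhs1, lhs2, hcard]
  have hne : ((2 * d - 1 : ℕ) : ℝ) ≠ 0 := ne_of_gt hpos
  set x : ℝ := ((2 * d - 1 : ℕ) : ℝ) with hx
  set a := n - 1 - l with hA
  set b := k + 1 - 1 - j with hB
  set c := i + 1 - 1 with hC
  set q := (j - i) + (l - k) with hQ
  have hq : n - 1 = a + (b + (c + q)) := by omega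
  rw [hq, pow_add, pow_add, pow_add, inv_pow]
  have hxq : x ^ q ≠ 0 := pow_ne_zero _ hne
  field_simp


/-! ### Walks from step sequences -/

def sext {n : ℕ} (s : Fin n → Idx d) (r : ℕ) : Fin d → ℤ :=
  if h : r < n then stepVec (s ⟨r, h⟩) else 0

def walkOf {n : ℕ} (s : Fin n → Idx d) : Fin (n + 1) → (Fin d → ℤ) :=
  fun i => ∑ r ∈ Finset.range (i : ℕ), sext s r

lemma walkOf_mk_succ {n : ℕ} (s : Fin n → Idx d) {i : ℕ} (h : i < n) (h' : i + 1 < n + 1) :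
    walkOf s ⟨i + 1, h'⟩ = walkOf s ⟨i, by omega⟩ + stepVec (s ⟨i, h⟩) := by
  show ∑ r ∈ Finset.range (i + 1), sext s r = _
  rw [Finset.sum_range_succ]
  congr 1
  simp [sext, h]

lemma sum_abs_stepVec (ι : Idx d) : ∑ j, |stepVec ι j| = 1 := by
  have : ∀ j : Fin d, |stepVec ι j| = if j = idx0 ι then 1 else 0 := by
    intro j
    rw [stepVec_apply]
    split_ifs with hj
    · obtain ⟨h1, -, -⟩ := Idx_facts ι
      rcases lt_trichotomy ι.1 0 with h|h|h
      · simp [Int.sign_eq_neg_one_of_neg h]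
      · exact absurd h h1
      · simp [Int.sign_eq_one_of_pos h]
    · simp
  rw [Finset.sum_congr rfl fun j _ => this j]
  simp

lemma stepVec_negIdx' (ι : Idx d) : stepVec (negIdx ι) = -stepVec ι := by
  funext j
  rw [stepVec_negIdx]
  simp

lemma isNBW_walkOf {n : ℕ} (s : Fin n → Idx d) (hs : Valid s) : IsNBW d n (walkOf s) := by
  refine ⟨rfl, ?_, ?_⟩
  · intro i hi
    rw [walkOf_mk_succ s hi]
    have : ∀ j, (walkOf s ⟨i, by omega⟩ + stepVec (s ⟨i, hi⟩)) j
        - walkOf s ⟨i, by omega⟩ j = stepVec (s ⟨i, hi⟩) j := by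
      intro j; simp
    rw [Finset.sum_congr rfl fun j _ => by rw [this j]]
    exact sum_abs_stepVec _
  · intro i hi hEq
    have h1 : i + 1 < n := by omega
    have h0 : i < n := by omega
    have hEq' : walkOf s ⟨i + 1 + 1, by omega⟩ = walkOf s ⟨i, by omega⟩ := hEq
    rw [walkOf_mk_succ s h1, walkOf_mk_succ s h0, add_assoc] at hEq'
    have h4 : stepVec (s ⟨i, h0⟩) + stepVec (s ⟨i + 1, h1⟩) = 0 :=
      add_eq_left.mp hEq'
    have h5 : stepVec (s ⟨i + 1, h1⟩) = stepVec (negIdx (s ⟨i, h0⟩)) := by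
      rw [stepVec_negIdx']
      funext j
      have := congrFun h4 j
      simp only [Pi.add_apply, Pi.zero_apply, Pi.neg_apply] at this ⊢
      linarith
    exact hs ⟨i, h0⟩ h1 (stepVec_injective h5)

lemma valid_of_isNBW {n : ℕ} (s : Fin n → Idx d) (h : IsNBW d n (walkOf s)) : Valid s := by
  rintro ⟨i, hi⟩ hi1 hEq
  have hi1' : i + 1 < n := hi1
  apply h.2.2 i (by omega)
  have e2 : walkOf s ⟨i + 1 + 1, by omega⟩
      = walkOf s ⟨i, by omega⟩ + stepVec (s ⟨i, hi⟩) + stepVec (s ⟨i + 1, hi1'⟩) := by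
    rw [walkOf_mk_succ s hi1', walkOf_mk_succ s hi]
  have hstep : s ⟨i + 1, hi1'⟩ = negIdx (s ⟨i, hi⟩) := hEq
  show walkOf s ⟨i + 1 + 1, by omega⟩ = walkOf s ⟨i, by omega⟩
  rw [e2, hstep, stepVec_negIdx']
  simp


lemma walkOf_injective {n : ℕ} : Function.Injective (walkOf (d := d) (n := n)) := by
  intro s s' h
  funext i
  rcases i with ⟨i, hi⟩
  have h1 := congrFun h ⟨i + 1, by omega⟩
  have h2 := congrFun h ⟨i, by omega⟩
  rw [walkOf_mk_succ s hi, walkOf_mk_succ s' hi] at h1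
  apply stepVec_injective
  funext j
  have := congrFun h1 j
  have h2j := congrFun h2 j
  simp only [Pi.add_apply] at this
  have e : walkOf s ⟨i, by omega⟩ j = walkOf s' ⟨i, by omega⟩ j := h2j
  linarith [this, e]

/-- classification of `ℓ¹`-unit vectors in `ℤ^d` -/
lemma unit_classify {v : Fin d → ℤ} (hv : ∑ j, |v j| = 1) : ∃ ι : Idx d, stepVec ι = v := by
  have hnz : ∃ j0, |v j0| ≠ 0 := by
    by_contra hc
    push_neg at hc
    rw [Finset.sum_congr rfl fun j _ => hc j] at hv
    simp at hv
  obtain ⟨j0, hj0⟩ := hnz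
  have h1 : |v j0| = 1 := by
    have hle : |v j0| ≤ ∑ j, |v j| :=
      Finset.single_le_sum (fun j _ => abs_nonneg (v j)) (Finset.mem_univ j0)
    have : 1 ≤ |v j0| := by
      rcases (abs_nonneg (v j0)).lt_or_eq with h | h
      · omega
      · exact absurd h.symm hj0
    omega
  have hrest : ∀ j, j ≠ j0 → v j = 0 := by
    intro j hj
    have hsplit := Finset.add_sum_erase Finset.univ (fun j => |v j|) (Finset.mem_univ j0)
    have hmem : j ∈ Finset.univ.erase j0 := Finset.mem_erase.mpr ⟨hj, Finset.mem_univ j⟩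
    have hle : |v j| ≤ ∑ x ∈ Finset.univ.erase j0, |v x| :=
      Finset.single_le_sum (fun x _ => abs_nonneg (v x)) hmem
    have hsplit' : |v j0| + ∑ x ∈ Finset.univ.erase j0, |v x| = 1 := hsplit.trans hv
    have hsum0 : ∑ x ∈ Finset.univ.erase j0, |v x| = 0 := by omega
    have : |v j| = 0 := le_antisymm (hsum0 ▸ hle) (abs_nonneg _)
    exact abs_eq_zero.mp this
  have hval : v j0 = 1 ∨ v j0 = -1 := (abs_eq (by norm_num)).mp h1
  set z : ℤ := if 0 < v j0 then ((j0 : ℕ) + 1 : ℕ) else -((j0 : ℕ) + 1 : ℕ) with hz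
  have hd1 : (j0 : ℕ) < d := j0.2
  have hmem : z ∈ Idx d := by
    refine mem_Idx' ?_ ?_ ?_ <;> rw [hz] <;> split_ifs <;> push_cast <;> omega
  have hnat : z.natAbs = (j0 : ℕ) + 1 := by
    rw [hz]; split_ifs <;> push_cast <;> omega
  have hpos' : (0 : ℤ) < (((j0 : ℕ) + 1 : ℕ) : ℤ) := by positivity
  have hsign : z.sign = v j0 := by
    rcases hval with h | h
    · rw [hz, if_pos (by omega), h]
      exact Int.sign_eq_one_of_pos hpos'
    · rw [hz, if_neg (by omega), h, Int.sign_neg, Int.sign_eq_one_of_pos hpos']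
  refine ⟨⟨z, hmem⟩, ?_⟩
  have hidx : idx0 (⟨z, hmem⟩ : Idx d) = j0 := by
    apply Fin.ext
    show z.natAbs - 1 = (j0 : ℕ)
    omega
  funext j
  rw [stepVec_apply, hidx]
  by_cases hj : j = j0
  · rw [if_pos hj, hj]
    exact hsign
  · rw [if_neg hj]
    exact (hrest j hj).symm


lemma walkOf_surj {n : ℕ} (ω : Fin (n + 1) → (Fin d → ℤ)) (h : IsNBW d n ω) :
    ∃ s : Fin n → Idx d, walkOf s = ω := by
  have hstep : ∀ i : ℕ, ∀ hi : i < n, ∃ ι : Idx d,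
      stepVec ι = fun j => ω ⟨i + 1, by omega⟩ j - ω ⟨i, by omega⟩ j := by
    intro i hi
    apply unit_classify
    exact h.2.1 i hi
  choose g hg using hstep
  refine ⟨fun i => g i.1 i.2, ?_⟩
  have key : ∀ i : ℕ, ∀ hi : i < n + 1, walkOf (fun i => g i.1 i.2) ⟨i, hi⟩ = ω ⟨i, hi⟩ := by
    intro i
    induction i with
    | zero =>
      intro hi
      show ∑ r ∈ Finset.range 0, sext (fun i => g i.1 i.2) r = ω ⟨0, hi⟩
      rw [Finset.sum_range_zero]
      exact h.1.symm
    | succ i ih =>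
      intro hi
      have hin : i < n := by omega
      rw [walkOf_mk_succ _ hin, ih (by omega)]
      have := hg i hin
      show ω ⟨i, by omega⟩ + stepVec (g i hin) = ω ⟨i + 1, hi⟩
      rw [this]
      funext j
      simp
  funext i
  rcases i with ⟨i, hi⟩
  exact key i hi

/-- the equivalence between valid step sequences and NBWs -/
def nbwEquiv (d n : ℕ) :
    {s : Fin n → Idx d // Valid s} ≃ {ω : Fin (n + 1) → (Fin d → ℤ) // IsNBW d n ω} :=
  Equiv.ofBijective (fun s => ⟨walkOf s.1, isNBW_walkOf s.1 s.2⟩)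
    ⟨fun a b hab => Subtype.ext (walkOf_injective (congrArg Subtype.val hab)),
      by
        rintro ⟨ω, hω⟩
        obtain ⟨s, hs⟩ := walkOf_surj ω hω
        exact ⟨⟨s, valid_of_isNBW s (hs ▸ hω)⟩, Subtype.ext hs⟩⟩

lemma tsum_walks {n : ℕ} (f : (Fin (n + 1) → (Fin d → ℤ)) → ℝ) :
    ∑' ω : {ω : Fin (n + 1) → (Fin d → ℤ) // IsNBW d n ω}, f ω.1
      = ∑ s ∈ P d n, f (walkOf s) := by
  rw [← Equiv.tsum_eq (nbwEquiv d n) (fun ω => f ω.1)]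
  rw [tsum_fintype]
  exact (Finset.sum_subtype _ (fun x => by simp [P]) (fun s => f (walkOf s))).symm


/-! ### Geometric sum bounds -/

lemma geom_bound {r : ℝ} (hr0 : 0 ≤ r) (hr : r ≤ 1 / 3) (N : ℕ) :
    ∑ t ∈ Finset.range N, r ^ t ≤ 3 / 2 := by
  have hr1 : r ≠ 1 := by linarith
  rw [geom_sum_eq hr1, show (r ^ N - 1) / (r - 1) = (1 - r ^ N) / (1 - r) by
    rw [← neg_div_neg_eq]; ring_nf]
  have hpow : 0 ≤ r ^ N := pow_nonneg hr0 N
  rw [div_le_iff₀ (by linarith)]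
  nlinarith

lemma inner_geom_bound {r : ℝ} (hr0 : 0 ≤ r) (hr : r ≤ 1 / 3) (a b i : ℕ)
    (hi : i ∈ Finset.Ico a b) :
    ∑ j ∈ Finset.Ico a b, r ^ Nat.dist i j ≤ 3 := by
  rw [Finset.mem_Ico] at hi
  have hmaps : ∀ j ∈ Finset.Ico a b, Nat.dist i j ∈ Finset.range (b - a) := by
    intro j hj
    rw [Finset.mem_Ico] at hj
    rw [Finset.mem_range, Nat.dist_eq_max_sub_min]
    omega
  rw [← Finset.sum_fiberwise_of_maps_to hmaps (fun j => r ^ Nat.dist i j)]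
  have hfiber : ∀ t ∈ Finset.range (b - a),
      ∑ j ∈ (Finset.Ico a b).filter (fun j => Nat.dist i j = t), r ^ Nat.dist i j
        ≤ 2 * r ^ t := by
    intro t _
    have hsub : (Finset.Ico a b).filter (fun j => Nat.dist i j = t)
        ⊆ {i - t, i + t} := by
      intro j hj
      rw [Finset.mem_filter, Finset.mem_Ico] at hj
      have := hj.2
      rw [Nat.dist_eq_max_sub_min] at this
      simp only [Finset.mem_insert, Finset.mem_singleton]
      omega
    have hcard : ((Finset.Ico a b).filter (fun j => Nat.dist i j = t)).card ≤ 2 := by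
      calc _ ≤ ({i - t, i + t} : Finset ℕ).card := Finset.card_le_card hsub
        _ ≤ 2 := Finset.card_insert_le _ _ |>.trans (by simp)
    calc ∑ j ∈ (Finset.Ico a b).filter (fun j => Nat.dist i j = t), r ^ Nat.dist i j
        = ∑ j ∈ (Finset.Ico a b).filter (fun j => Nat.dist i j = t), r ^ t := by
          refine Finset.sum_congr rfl fun j hj => ?_
          rw [(Finset.mem_filter.mp hj).2]
      _ = ((Finset.Ico a b).filter (fun j => Nat.dist i j = t)).card * r ^ t := by
          rw [Finset.sum_const, nsmul_eq_mul]
      _ ≤ 2 * r ^ t := by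
          apply mul_le_mul_of_nonneg_right _ (pow_nonneg hr0 t)
          exact_mod_cast hcard
  calc ∑ t ∈ Finset.range (b - a),
        ∑ j ∈ (Finset.Ico a b).filter (fun j => Nat.dist i j = t), r ^ Nat.dist i j
      ≤ ∑ t ∈ Finset.range (b - a), 2 * r ^ t := Finset.sum_le_sum hfiber
    _ = 2 * ∑ t ∈ Finset.range (b - a), r ^ t := by rw [Finset.mul_sum]
    _ ≤ 2 * (3 / 2) := by
        apply mul_le_mul_of_nonneg_left (geom_bound hr0 hr _) (by norm_num)
    _ = 3 := by norm_num

lemma double_geom_bound {r : ℝ} (hr0 : 0 ≤ r) (hr : r ≤ 1 / 3) (a b : ℕ) :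
    ∑ p ∈ (Finset.Ico a b) ×ˢ (Finset.Ico a b), r ^ Nat.dist p.1 p.2
      ≤ 3 * ((b - a : ℕ) : ℝ) := by
  rw [Finset.sum_product]
  calc ∑ i ∈ Finset.Ico a b, ∑ j ∈ Finset.Ico a b, r ^ Nat.dist i j
      ≤ ∑ i ∈ Finset.Ico a b, 3 :=
        Finset.sum_le_sum fun i hi => inner_geom_bound hr0 hr a b i hi
    _ = 3 * ((b - a : ℕ) : ℝ) := by
        rw [Finset.sum_const, nsmul_eq_mul, Nat.card_Ico]
        ring

/-! ### Displacement expansion -/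

/-- real dot product of extended steps -/
def dd {n : ℕ} (s : Fin n → Idx d) (i i' : ℕ) : ℝ :=
  ∑ j, ((sext s i j : ℤ) : ℝ) * ((sext s i' j : ℤ) : ℝ)

lemma dd_eq {n : ℕ} (s : Fin n → Idx d) {i i' : ℕ} (hi : i < n) (hi' : i' < n) :
    dd s i i' = dotE (s ⟨i, hi⟩) (s ⟨i', hi'⟩) := by
  unfold dd dotE
  refine Finset.sum_congr rfl fun j _ => ?_
  rw [sext, sext, dif_pos hi, dif_pos hi']

lemma sq_disp {n : ℕ} (s : Fin n → Idx d) (a b : ℕ) (hab : a ≤ b) (ha : a < n + 1)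
    (hb : b < n + 1) :
    (∑ j, (((walkOf s ⟨b, hb⟩ j - walkOf s ⟨a, ha⟩ j : ℤ) : ℝ)) ^ 2)
      = ∑ p ∈ (Finset.Ico a b) ×ˢ (Finset.Ico a b), dd s p.1 p.2 := by
  have hdiff : ∀ j, ((walkOf s ⟨b, hb⟩ j - walkOf s ⟨a, ha⟩ j : ℤ) : ℝ)
      = ∑ i ∈ Finset.Ico a b, ((sext s i j : ℤ) : ℝ) := by
    intro j
    have h1 : walkOf s ⟨b, hb⟩ j - walkOf s ⟨a, ha⟩ j
        = ∑ i ∈ Finset.Ico a b, sext s i j := by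
      have h2 : walkOf s ⟨b, hb⟩ j = ∑ i ∈ Finset.range b, sext s i j := by
        show (∑ i ∈ Finset.range b, sext s i) j = _
        rw [Finset.sum_apply]
      have h3 : walkOf s ⟨a, ha⟩ j = ∑ i ∈ Finset.range a, sext s i j := by
        show (∑ i ∈ Finset.range a, sext s i) j = _
        rw [Finset.sum_apply]
      rw [h2, h3, Finset.sum_Ico_eq_sub _ hab]
    rw [h1]
    push_cast
    rfl
  calc (∑ j, (((walkOf s ⟨b, hb⟩ j - walkOf s ⟨a, ha⟩ j : ℤ) : ℝ)) ^ 2)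
      = ∑ j, (∑ i ∈ Finset.Ico a b, ((sext s i j : ℤ) : ℝ))
          * (∑ i' ∈ Finset.Ico a b, ((sext s i' j : ℤ) : ℝ)) := by
        refine Finset.sum_congr rfl fun j _ => ?_
        rw [hdiff j, sq]
    _ = ∑ j, ∑ p ∈ (Finset.Ico a b) ×ˢ (Finset.Ico a b),
          ((sext s p.1 j : ℤ) : ℝ) * ((sext s p.2 j : ℤ) : ℝ) := by
        refine Finset.sum_congr rfl fun j _ => ?_
        rw [Finset.sum_mul_sum, Finset.sum_product]
    _ = ∑ p ∈ (Finset.Ico a b) ×ˢ (Finset.Ico a b), dd s p.1 p.2 := by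
        rw [Finset.sum_comm]
        rfl

/-- fourth moment: general index order -/
lemma Qdd (hd : 1 ≤ d) {n i j k l : ℕ} (hik : i < k) (hjk : j < k) (hil : i < l)
    (hjl : j < l) (hkn : k < n) (hln : l < n) :
    ∑ s ∈ P d n, dd s i j * dd s k l
      = (2 * d : ℝ) * ((2 * d - 1 : ℕ) : ℝ) ^ (n - 1)
          * (((2 * d - 1 : ℕ) : ℝ)⁻¹) ^ (Nat.dist i j + Nat.dist k l) := by
  have hin : i < n := by omega
  have hjn : j < n := by omega
  have hdd : ∀ s ∈ P d n, dd s i j * dd s k l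
      = dotE (s ⟨i, hin⟩) (s ⟨j, hjn⟩) * dotE (s ⟨k, hkn⟩) (s ⟨l, hln⟩) := fun s _ => by
    rw [dd_eq s hin hjn, dd_eq s hkn hln]
  rw [Finset.sum_congr rfl hdd]
  rcases le_or_gt i j with hij | hij <;> rcases le_or_gt k l with hkl | hkl
  · rw [Nat.dist_eq_sub_of_le hij, Nat.dist_eq_sub_of_le hkl]
    exact Qval hd hij hjk hkl hln
  · rw [Nat.dist_eq_sub_of_le hij, Nat.dist_eq_sub_of_le_right hkl.le]
    rw [Finset.sum_congr rfl fun s _ => by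
      rw [dotE_comm (s ⟨k, hkn⟩) (s ⟨l, hln⟩)]]
    exact Qval hd hij hjl hkl.le hkn
  · rw [Nat.dist_eq_sub_of_le_right hij.le, Nat.dist_eq_sub_of_le hkl]
    rw [Finset.sum_congr rfl fun s _ => by
      rw [dotE_comm (s ⟨i, hin⟩) (s ⟨j, hjn⟩)]]
    exact Qval hd hij.le hik hkl hln
  · rw [Nat.dist_eq_sub_of_le_right hij.le, Nat.dist_eq_sub_of_le_right hkl.le]
    rw [Finset.sum_congr rfl fun s _ => by
      rw [dotE_comm (s ⟨i, hin⟩) (s ⟨j, hjn⟩), dotE_comm (s ⟨k, hkn⟩) (s ⟨l, hln⟩)]]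
    exact Qval hd hij.le hil hkl.le hkn

/-- main fourth-moment sum bound -/
lemma main_bound (hd : 2 ≤ d) {n : ℕ} (a b c : ℕ) (hab : a ≤ b) (hbc : b ≤ c)
    (hcn : c ≤ n) :
    ∑ s ∈ P d n,
        (∑ p ∈ (Finset.Ico a b) ×ˢ (Finset.Ico a b), dd s p.1 p.2)
          * (∑ q ∈ (Finset.Ico b c) ×ˢ (Finset.Ico b c), dd s q.1 q.2)
      ≤ (2 * d : ℝ) * ((2 * d - 1 : ℕ) : ℝ) ^ (n - 1)
          * (3 * ((b - a : ℕ) : ℝ)) * (3 * ((c - b : ℕ) : ℝ)) := by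
  set A := (Finset.Ico a b) ×ˢ (Finset.Ico a b) with hA
  set B := (Finset.Ico b c) ×ˢ (Finset.Ico b c) with hB
  set N : ℝ := (2 * d : ℝ) * ((2 * d - 1 : ℕ) : ℝ) ^ (n - 1) with hN
  set r : ℝ := (((2 * d - 1 : ℕ) : ℝ))⁻¹ with hr
  have hr0 : 0 ≤ r := by positivity
  have hr3 : r ≤ 1 / 3 := by
    rw [hr]
    have h3 : (3 : ℝ) ≤ ((2 * d - 1 : ℕ) : ℝ) := by
      exact_mod_cast (by omega : 3 ≤ 2 * d - 1)
    calc (((2 * d - 1 : ℕ) : ℝ))⁻¹ ≤ (3 : ℝ)⁻¹ := by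
          apply inv_anti₀ (by norm_num) h3
      _ = 1 / 3 := by norm_num
  have hNpos : 0 < N := by
    rw [hN]
    have : (0 : ℝ) < ((2 * d - 1 : ℕ) : ℝ) := by
      exact_mod_cast (by omega : 0 < 2 * d - 1)
    positivity
  have hstep1 : ∑ s ∈ P d n,
      (∑ p ∈ A, dd s p.1 p.2) * (∑ q ∈ B, dd s q.1 q.2)
      = ∑ p ∈ A, ∑ q ∈ B, ∑ s ∈ P d n, dd s p.1 p.2 * dd s q.1 q.2 := by
    have e1 : ∑ s ∈ P d n, (∑ p ∈ A, dd s p.1 p.2) * (∑ q ∈ B, dd s q.1 q.2)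
        = ∑ s ∈ P d n, ∑ p ∈ A, ∑ q ∈ B, dd s p.1 p.2 * dd s q.1 q.2 :=
      Finset.sum_congr rfl fun s _ => Finset.sum_mul_sum A B _ _
    rw [e1, Finset.sum_comm]
    exact Finset.sum_congr rfl fun p _ => Finset.sum_comm

  have hstep2 : ∀ p ∈ A, ∀ q ∈ B,
      ∑ s ∈ P d n, dd s p.1 p.2 * dd s q.1 q.2
        = N * (r ^ (Nat.dist p.1 p.2) * r ^ (Nat.dist q.1 q.2)) := by
    intro p hp q hq
    rw [hA, Finset.mem_product, Finset.mem_Ico, Finset.mem_Ico] at hp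
    rw [hB, Finset.mem_product, Finset.mem_Ico, Finset.mem_Ico] at hq
    have := Qdd (d := d) (by omega) (n := n) (i := p.1) (j := p.2) (k := q.1) (l := q.2)
      (by omega) (by omega) (by omega) (by omega) (by omega) (by omega)
    rw [this, ← pow_add]
  have hstep3 : ∑ p ∈ A, ∑ q ∈ B, ∑ s ∈ P d n, dd s p.1 p.2 * dd s q.1 q.2
      = N * ((∑ p ∈ A, r ^ (Nat.dist p.1 p.2)) * (∑ q ∈ B, r ^ (Nat.dist q.1 q.2))) := by
    have e : N * ((∑ p ∈ A, r ^ (Nat.dist p.1 p.2)) * (∑ q ∈ B, r ^ (Nat.dist q.1 q.2)))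
        = ∑ p ∈ A, ∑ q ∈ B, N * (r ^ (Nat.dist p.1 p.2) * r ^ (Nat.dist q.1 q.2)) := by
      rw [Finset.sum_mul_sum A B (fun p => r ^ (Nat.dist p.1 p.2))
        (fun q => r ^ (Nat.dist q.1 q.2)), Finset.mul_sum]
      exact Finset.sum_congr rfl fun p _ => by rw [Finset.mul_sum]
    rw [Finset.sum_congr rfl fun p hp => Finset.sum_congr rfl fun q hq => hstep2 p hp q hq]
    exact e.symm
  rw [hstep1, hstep3]
  have g1 := double_geom_bound hr0 hr3 a b
  have g2 := double_geom_bound hr0 hr3 b c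
  have hg2 : 0 ≤ ∑ q ∈ B, r ^ (Nat.dist q.1 q.2) :=
    Finset.sum_nonneg fun q _ => pow_nonneg hr0 _
  calc N * ((∑ p ∈ A, r ^ (Nat.dist p.1 p.2)) * (∑ q ∈ B, r ^ (Nat.dist q.1 q.2)))
      ≤ N * ((3 * ((b - a : ℕ) : ℝ)) * (3 * ((c - b : ℕ) : ℝ))) := by
        apply mul_le_mul_of_nonneg_left _ hNpos.le
        apply mul_le_mul g1 g2 hg2 (by positivity)
    _ = N * (3 * ((b - a : ℕ) : ℝ)) * (3 * ((c - b : ℕ) : ℝ)) := by ring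

end NBWAux

set_option maxHeartbeats 1000000 in

set_option maxHeartbeats 1000000 in
open NBWAux in
/-- the tightness moment bound
`E[‖X_n(t₂)−X_n(t₁)‖₂²·‖X_n(t₃)−X_n(t₂)‖₂²] ≤ K(t₂−t₁)(t₃−t₂)` where `X_n(t) = ω_{⌊nt⌋}/√n`. -/
theorem nbw_tightness (d : ℕ) (hd : 2 ≤ d) (t1 t2 t3 : ℝ)
    (h0 : 0 ≤ t1) (h12 : t1 < t2) (h23 : t2 < t3) (h31 : t3 ≤ 1) :
    ∃ K > (0 : ℝ), ∀ n : ℕ, 1 ≤ n →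
      (∑' ω : {ω : Fin (n + 1) → (Fin d → ℤ) // IsNBW d n ω},
          ((∑ j, ((ω.1 ⟨⌊t2 * n⌋₊, floor_index_lt (by linarith) n⟩ j -
              ω.1 ⟨⌊t1 * n⌋₊, floor_index_lt (by linarith) n⟩ j : ℤ) : ℝ) ^ 2) / n) *
          ((∑ j, ((ω.1 ⟨⌊t3 * n⌋₊, floor_index_lt (by linarith) n⟩ j -
              ω.1 ⟨⌊t2 * n⌋₊, floor_index_lt (by linarith) n⟩ j : ℤ) : ℝ) ^ 2) / n)) /
        (2 * (d : ℝ) * (2 * (d : ℝ) - 1) ^ (n - 1)) ≤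
      K * (t2 - t1) * (t3 - t2) := by
  have hd1 : 1 ≤ d := by omega
  have h21 : 0 < t2 - t1 := by linarith
  have h32 : 0 < t3 - t2 := by linarith
  refine ⟨9 * (1 + 1 / (t2 - t1)) * (1 + 1 / (t3 - t2)), by positivity, ?_⟩
  intro n hn
  have ha : ⌊t1 * (n : ℝ)⌋₊ < n + 1 := floor_index_lt (by linarith) n
  have hb : ⌊t2 * (n : ℝ)⌋₊ < n + 1 := floor_index_lt (by linarith) n
  have hc : ⌊t3 * (n : ℝ)⌋₊ < n + 1 := floor_index_lt (by linarith) n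
  show (∑' ω : {ω : Fin (n + 1) → (Fin d → ℤ) // IsNBW d n ω},
          ((∑ j, ((ω.1 ⟨⌊t2 * (n : ℝ)⌋₊, hb⟩ j -
              ω.1 ⟨⌊t1 * (n : ℝ)⌋₊, ha⟩ j : ℤ) : ℝ) ^ 2) / (n : ℝ)) *
          ((∑ j, ((ω.1 ⟨⌊t3 * (n : ℝ)⌋₊, hc⟩ j -
              ω.1 ⟨⌊t2 * (n : ℝ)⌋₊, hb⟩ j : ℤ) : ℝ) ^ 2) / (n : ℝ))) /
        (2 * (d : ℝ) * (2 * (d : ℝ) - 1) ^ (n - 1)) ≤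
      9 * (1 + 1 / (t2 - t1)) * (1 + 1 / (t3 - t2)) * (t2 - t1) * (t3 - t2)
  set a := ⌊t1 * (n : ℝ)⌋₊ with ha'
  set b := ⌊t2 * (n : ℝ)⌋₊ with hb'
  set c := ⌊t3 * (n : ℝ)⌋₊ with hc'
  have hnR : (1 : ℝ) ≤ (n : ℝ) := by exact_mod_cast hn
  have hnpos : (0 : ℝ) < (n : ℝ) := by linarith
  have hab : a ≤ b := Nat.floor_le_floor
    (mul_le_mul_of_nonneg_right h12.le (Nat.cast_nonneg n))
  have hbc : b ≤ c := Nat.floor_le_floor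
    (mul_le_mul_of_nonneg_right h23.le (Nat.cast_nonneg n))
  have hcn : c ≤ n := by omega
  -- rewrite the tsum as a finite sum over step sequences
  have hrw : (∑' ω : {ω : Fin (n + 1) → (Fin d → ℤ) // IsNBW d n ω},
          ((∑ j, ((ω.1 ⟨b, hb⟩ j - ω.1 ⟨a, ha⟩ j : ℤ) : ℝ) ^ 2) / (n : ℝ)) *
          ((∑ j, ((ω.1 ⟨c, hc⟩ j - ω.1 ⟨b, hb⟩ j : ℤ) : ℝ) ^ 2) / (n : ℝ)))
      = ∑ s ∈ P d n,
          ((∑ p ∈ (Finset.Ico a b) ×ˢ (Finset.Ico a b), dd s p.1 p.2) / (n : ℝ))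
            * ((∑ q ∈ (Finset.Ico b c) ×ˢ (Finset.Ico b c), dd s q.1 q.2) / (n : ℝ)) := by
    have h1 := tsum_walks (d := d) (n := n) (fun w =>
      ((∑ j, ((w ⟨b, hb⟩ j - w ⟨a, ha⟩ j : ℤ) : ℝ) ^ 2) / (n : ℝ)) *
      ((∑ j, ((w ⟨c, hc⟩ j - w ⟨b, hb⟩ j : ℤ) : ℝ) ^ 2) / (n : ℝ)))
    refine h1.trans (Finset.sum_congr rfl fun s _ => ?_)
    rw [sq_disp s a b hab ha hb, sq_disp s b c hbc hb hc]
  rw [hrw]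
  -- combine the divisions
  have hsum : ∑ s ∈ P d n,
        ((∑ p ∈ (Finset.Ico a b) ×ˢ (Finset.Ico a b), dd s p.1 p.2) / (n : ℝ))
          * ((∑ q ∈ (Finset.Ico b c) ×ˢ (Finset.Ico b c), dd s q.1 q.2) / (n : ℝ))
      = (∑ s ∈ P d n,
          (∑ p ∈ (Finset.Ico a b) ×ˢ (Finset.Ico a b), dd s p.1 p.2)
            * (∑ q ∈ (Finset.Ico b c) ×ˢ (Finset.Ico b c), dd s q.1 q.2)) / (n : ℝ) ^ 2 := by
    rw [Finset.sum_div]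
    refine Finset.sum_congr rfl fun s _ => ?_
    rw [div_mul_div_comm, sq]
  rw [hsum, div_div]
  set X := ((b - a : ℕ) : ℝ) with hX
  set Y := ((c - b : ℕ) : ℝ) with hY
  have hXnn : 0 ≤ X := Nat.cast_nonneg _
  have hYnn : 0 ≤ Y := Nat.cast_nonneg _
  have hcast : ((2 * d - 1 : ℕ) : ℝ) = 2 * (d : ℝ) - 1 := by
    have : (1 : ℕ) ≤ 2 * d := by omega
    push_cast [this]
    ring
  have hxpos : (0 : ℝ) < 2 * (d : ℝ) - 1 := by
    have : (2 : ℝ) ≤ (d : ℝ) := by exact_mod_cast hd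
    linarith
  have hNpos : (0 : ℝ) < 2 * (d : ℝ) * (2 * (d : ℝ) - 1) ^ (n - 1) := by positivity
  have hT := main_bound (d := d) hd (n := n) a b c hab hbc hcn
  rw [hcast] at hT
  have hba : X ≤ (1 + 1 / (t2 - t1)) * (t2 - t1) * (n : ℝ) := by
    have h1 : X = (b : ℝ) - (a : ℝ) := by rw [hX, Nat.cast_sub hab]
    have h2 : (b : ℝ) ≤ t2 * n := Nat.floor_le (mul_nonneg (by linarith) (Nat.cast_nonneg n))
    have h3 : t1 * n < (a : ℝ) + 1 := Nat.lt_floor_add_one _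
    have hR : (1 + 1 / (t2 - t1)) * (t2 - t1) * (n : ℝ) = (t2 - t1) * n + n := by
      field_simp
    rw [h1, hR]
    nlinarith
  have hcb : Y ≤ (1 + 1 / (t3 - t2)) * (t3 - t2) * (n : ℝ) := by
    have h1 : Y = (c : ℝ) - (b : ℝ) := by rw [hY, Nat.cast_sub hbc]
    have h2 : (c : ℝ) ≤ t3 * n := Nat.floor_le (mul_nonneg (by linarith) (Nat.cast_nonneg n))
    have h3 : t2 * n < (b : ℝ) + 1 := Nat.lt_floor_add_one _
    have hR : (1 + 1 / (t3 - t2)) * (t3 - t2) * (n : ℝ) = (t3 - t2) * n + n := by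
      field_simp
    rw [h1, hR]
    nlinarith
  calc (∑ s ∈ P d n,
          (∑ p ∈ (Finset.Ico a b) ×ˢ (Finset.Ico a b), dd s p.1 p.2)
            * (∑ q ∈ (Finset.Ico b c) ×ˢ (Finset.Ico b c), dd s q.1 q.2))
        / ((n : ℝ) ^ 2 * (2 * (d : ℝ) * (2 * (d : ℝ) - 1) ^ (n - 1)))
      ≤ (2 * (d : ℝ) * (2 * (d : ℝ) - 1) ^ (n - 1) * (3 * X) * (3 * Y))
        / ((n : ℝ) ^ 2 * (2 * (d : ℝ) * (2 * (d : ℝ) - 1) ^ (n - 1))) := by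
        have hD : (0 : ℝ) < (n : ℝ) ^ 2 * (2 * (d : ℝ) * (2 * (d : ℝ) - 1) ^ (n - 1)) := by
          positivity
        exact (div_le_div_iff_of_pos_right hD).mpr hT
    _ = 9 * X * Y / (n : ℝ) ^ 2 := by
        field_simp
        ring
    _ ≤ 9 * ((1 + 1 / (t2 - t1)) * (t2 - t1) * (n : ℝ))
          * ((1 + 1 / (t3 - t2)) * (t3 - t2) * (n : ℝ)) / (n : ℝ) ^ 2 := by
        gcongr
    _ = 9 * (1 + 1 / (t2 - t1)) * (1 + 1 / (t3 - t2)) * (t2 - t1) * (t3 - t2) := by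
        field_simp

end
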